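/- Let η, γ : ℝⁿ → ℝ be continuous and r-homogeneous of degree m > 0 with γ ≤ 0 and {x ≠ 0 : γ(x) = 0} ⊆ {x ≠ 0 : η(x) < 0}. Then there exists λ* such that for all λ ≥ λ*, the function η + λγ is negative definite, i.e., η(x) + λγ(x) < 0 for all x ≠ 0. -/
import Mathlib


/-- `V` is `r`-homogeneous of degree `m`: `V(ε^{r₁}x₁,…,ε^{rₙ}xₙ) = ε^m V(x)` for all `ε > 0`. -/
def RHomogeneous {n : ℕ} (r : Fin n → ℝ) (m : ℝ) (V : (Fin n → ℝ) → ℝ) : Prop :=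
  ∀ ε : ℝ, 0 < ε → ∀ x : Fin n → ℝ, V (fun i => ε ^ (r i) * x i) = ε ^ m * V x

/-- Any nonzero point can be rescaled (with the weighted dilation) to the unit sphere. -/
lemma exists_scale_to_sphere {n : ℕ} (r : Fin n → ℝ) (hr : ∀ i, 0 < r i)
    (x : Fin n → ℝ) (hx : x ≠ 0) :
    ∃ ε : ℝ, 0 < ε ∧ ‖(fun i => ε ^ (r i) * x i : Fin n → ℝ)‖ = 1 := by
  obtain ⟨j, hj⟩ : ∃ j, x j ≠ 0 := by
    by_contra h
    push_neg at h
    exact hx (funext h)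
  have hxj : 0 < |x j| := abs_pos.mpr hj
  set h : ℝ → (Fin n → ℝ) := fun ε => fun i => ε ^ (r i) * x i with hh
  have hcont : Continuous h := by
    refine continuous_pi fun i => ?_
    exact (Real.continuous_rpow_const (hr i).le).mul continuous_const
  have hg : Continuous fun ε => ‖h ε‖ := hcont.norm
  -- find b with ‖h b‖ ≥ 1
  have htop := (tendsto_rpow_atTop (hr j)).eventually_ge_atTop (1 / |x j|)
  obtain ⟨b, hb⟩ := (htop.and (Filter.eventually_ge_atTop (0:ℝ))).exists
  obtain ⟨hb1, hb0⟩ := hb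
  have hgb : 1 ≤ ‖h b‖ := by
    have h1 : ‖h b j‖ ≤ ‖h b‖ := norm_le_pi_norm (h b) j
    have h2 : ‖h b j‖ = b ^ (r j) * |x j| := by
      simp [hh, abs_mul, abs_of_nonneg (Real.rpow_nonneg hb0 (r j))]
    rw [h2] at h1
    have : 1 ≤ b ^ (r j) * |x j| := (div_le_iff₀ hxj).mp hb1
    linarith
  have hg0 : ‖h 0‖ = 0 := by
    have : h 0 = 0 := by
      funext i
      simp [hh, Real.zero_rpow (hr i).ne']
    simp [this]
  have hivt := intermediate_value_Icc hb0 (hg.continuousOn (s := Set.Icc 0 b))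
  have h1mem : (1:ℝ) ∈ Set.Icc ‖h 0‖ ‖h b‖ := by
    rw [hg0]; exact ⟨zero_le_one, hgb⟩
  obtain ⟨ε, hεmem, hε1⟩ := hivt h1mem
  refine ⟨ε, ?_, hε1⟩
  rcases hεmem.1.lt_or_eq with hlt | heq
  · exact hlt
  · exfalso
    have : ‖h 0‖ = 1 := by rw [heq]; exact hε1
    rw [hg0] at this; norm_num at this

theorem stmt_3 {n : ℕ} (r : Fin n → ℝ) (hr : ∀ i, 0 < r i) (m : ℝ) (hm : 0 < m)
    (η γ : (Fin n → ℝ) → ℝ) (hηc : Continuous η) (hγc : Continuous γ)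
    (hη : RHomogeneous r m η) (hγ : RHomogeneous r m γ)
    (hγneg : ∀ x, γ x ≤ 0)
    (hsub : {x : Fin n → ℝ | x ≠ 0 ∧ γ x = 0} ⊆ {x : Fin n → ℝ | x ≠ 0 ∧ η x < 0}) :
    ∃ lamStar : ℝ, ∀ lam : ℝ, lamStar ≤ lam →
      ∀ x : Fin n → ℝ, x ≠ 0 → η x + lam * γ x < 0 := by
  -- it suffices to find λ* working on the unit sphere
  suffices hS : ∃ L : ℝ, 0 ≤ L ∧ ∀ lam : ℝ, L ≤ lam →
      ∀ y : Fin n → ℝ, ‖y‖ = 1 → η y + lam * γ y < 0 by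
    obtain ⟨L, _, hL⟩ := hS
    refine ⟨L, fun lam hlam x hx => ?_⟩
    obtain ⟨ε, hε, hεn⟩ := exists_scale_to_sphere r hr x hx
    set y : Fin n → ℝ := fun i => ε ^ (r i) * x i with hy
    have hkey : η y + lam * γ y < 0 := hL lam hlam y hεn
    have h1 : η y = ε ^ m * η x := hη ε hε x
    have h2 : γ y = ε ^ m * γ x := hγ ε hε x
    rw [h1, h2] at hkey
    have hεm : 0 < ε ^ m := Real.rpow_pos_of_pos hε m
    nlinarith [mul_pos hεm hεm]
  -- compactness argument on the sphere
  set S : Set (Fin n → ℝ) := Metric.sphere 0 1 with hSdef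
  have hScpt : IsCompact S := isCompact_sphere 0 1
  have hmemS : ∀ y : Fin n → ℝ, ‖y‖ = 1 → y ∈ S := by
    intro y hy
    simp [hSdef, Metric.mem_sphere, dist_zero_right, hy]
  set K : Set (Fin n → ℝ) := S ∩ η ⁻¹' (Set.Ici 0) with hKdef
  have hKcpt : IsCompact K := hScpt.inter_right (isClosed_Ici.preimage hηc)
  rcases K.eq_empty_or_nonempty with hKe | hKne
  · -- η < 0 on the whole sphere, take L = 0
    refine ⟨0, le_refl 0, fun lam hlam y hy => ?_⟩
    have hyS : y ∈ S := hmemS y hy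
    have hηy : η y < 0 := by
      by_contra h
      push_neg at h
      have : y ∈ K := ⟨hyS, h⟩
      rw [hKe] at this; exact this
    have : lam * γ y ≤ 0 := mul_nonpos_of_nonneg_of_nonpos hlam (hγneg y)
    linarith
  · obtain ⟨z, hzK, hz⟩ := hKcpt.exists_isMaxOn hKne hγc.continuousOn
    have hzS : z ∈ S := hzK.1
    have hzne : z ≠ 0 := by
      intro h
      have : ‖z‖ = 1 := by simpa [hSdef, dist_zero_right] using hzS
      rw [h] at this; simp at this
    have hγz : γ z < 0 := by
      rcases (hγneg z).lt_or_eq with h | h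
      · exact h
      · exfalso
        have := hsub ⟨hzne, h⟩
        exact absurd hzK.2 (not_le.mpr this.2)
    obtain ⟨w, hwS, hw⟩ := hScpt.exists_isMaxOn ⟨z, hzS⟩ hηc.continuousOn
    set M := η w with hM
    set L : ℝ := max 0 ((M + 1) / (-γ z)) with hL
    refine ⟨L, le_max_left _ _, fun lam hlam y hy => ?_⟩
    have hyS : y ∈ S := hmemS y hy
    have hlam0 : 0 ≤ lam := le_trans (le_max_left _ _) hlam
    rcases lt_or_ge (η y) 0 with h | h
    · have : lam * γ y ≤ 0 := mul_nonpos_of_nonneg_of_nonpos hlam0 (hγneg y)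
      linarith
    · have hyK : y ∈ K := ⟨hyS, h⟩
      have hγyz : γ y ≤ γ z := hz hyK
      have hηM : η y ≤ M := hw hyS
      have hlam2 : (M + 1) / (-γ z) ≤ lam := le_trans (le_max_right _ _) hlam
      have hpos : 0 < -γ z := by linarith
      have : M + 1 ≤ lam * (-γ z) := (div_le_iff₀ hpos).mp hlam2
      have h3 : lam * γ y ≤ lam * γ z := mul_le_mul_of_nonneg_left hγyz hlam0
      nlinarith
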